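/- arXiv:2105.14056 — 4 statements merged into one kernel-verified Lean document; each statement's English description precedes it below -/
import Mathlib

section
/- Let γ ∈ (0,1) and let C > 0 satisfy γ·C^γ + γ - 1 ≥ 0. Then for a nonnegative real random variable Z with finite expectation, exp((E[Z])^γ) ≤ exp(C^γ) · E[exp(Z^γ)]. -/
/-!
For `C ≥ 0` with `γ C^γ + γ - 1 ≥ 0`, the function `y ↦ exp (y ^ γ)` is convex on `[C, ∞)`: its
second derivative is `γ y^(γ-2) (γ y^γ + γ - 1) exp (y^γ)`, and `γ y^γ + γ - 1` is increasing in
`y`. Jensen's inequality applied to `C + Z` gives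
`exp ((E Z)^γ) ≤ exp ((C + E Z)^γ) ≤ E exp ((C + Z)^γ)`, and subadditivity of `x ↦ x^γ` bounds
`exp ((C + Z)^γ)` by `exp (C^γ) exp (Z^γ)`.
-/

open MeasureTheory Real Set

lemma hasDerivAt_exp_rpow (γ : ℝ) {y : ℝ} (hy : 0 < y) :
    HasDerivAt (fun y ↦ exp (y ^ γ)) (exp (y ^ γ) * (γ * y ^ (γ - 1))) y :=
  (hasDerivAt_rpow_const (Or.inl hy.ne')).exp

lemma hasDerivAt_deriv_exp_rpow (γ : ℝ) {y : ℝ} (hy : 0 < y) :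
    HasDerivAt (fun y ↦ exp (y ^ γ) * (γ * y ^ (γ - 1)))
      (γ * y ^ (γ - 2) * (γ * y ^ γ + γ - 1) * exp (y ^ γ)) y := by
  have h := (hasDerivAt_exp_rpow γ hy).mul
    ((hasDerivAt_rpow_const (p := γ - 1) (Or.inl hy.ne')).const_mul γ)
  have hsq : y ^ (γ - 1) * y ^ (γ - 1) = y ^ (γ - 2) * y ^ γ := by
    rw [← rpow_add hy, ← rpow_add hy]
    ring_nf
  refine h.congr_deriv ?_
  rw [show γ - 1 - 1 = γ - 2 by ring]
  linear_combination (γ * γ * exp (y ^ γ)) * hsq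

lemma convexOn_exp_rpow {γ C : ℝ} (hγ : 0 ≤ γ) (hC : 0 ≤ C) (hCγ : 0 ≤ γ * C ^ γ + γ - 1) :
    ConvexOn ℝ (Ici C) (fun y ↦ exp (y ^ γ)) := by
  have hpos {y : ℝ} (hy : y ∈ interior (Ici C)) : 0 < y :=
    hC.trans_lt (by rwa [interior_Ici] at hy)
  refine convexOn_of_hasDerivWithinAt2_nonneg (f' := fun y ↦ exp (y ^ γ) * (γ * y ^ (γ - 1)))
    (f'' := fun y ↦ γ * y ^ (γ - 2) * (γ * y ^ γ + γ - 1) * exp (y ^ γ)) (convex_Ici C)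
    (continuous_exp.comp (continuous_rpow_const hγ)).continuousOn
    (fun y hy ↦ (hasDerivAt_exp_rpow γ (hpos hy)).hasDerivWithinAt)
    (fun y hy ↦ (hasDerivAt_deriv_exp_rpow γ (hpos hy)).hasDerivWithinAt) (fun y hy ↦ ?_)
  rw [interior_Ici] at hy
  have hmono : γ * C ^ γ ≤ γ * y ^ γ := mul_le_mul_of_nonneg_left (rpow_le_rpow hC hy.le hγ) hγ
  have hfactor : 0 ≤ γ * y ^ γ + γ - 1 := by linarith
  have hrpow : 0 < y ^ (γ - 2) := rpow_pos_of_pos (hC.trans_lt hy) _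
  positivity

lemma exp_rpow_add_le_mul {γ x y : ℝ} (hx : 0 ≤ x) (hy : 0 ≤ y) (hγ0 : 0 ≤ γ) (hγ1 : γ ≤ 1) :
    exp ((x + y) ^ γ) ≤ exp (x ^ γ) * exp (y ^ γ) := by
  rw [← exp_add]
  exact exp_le_exp.2 (rpow_add_le_add_rpow hx hy hγ0 hγ1)

theorem exp_rpow_integral_le {Ω : Type*} [MeasurableSpace Ω] {ℙ : Measure Ω}
    [IsProbabilityMeasure ℙ] {γ C : ℝ} (hγ0 : 0 ≤ γ) (hγ1 : γ ≤ 1) (hC : 0 ≤ C)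
    (hCγ : 0 ≤ γ * C ^ γ + γ - 1) {Z : Ω → ℝ} (hZ_nonneg : ∀ ω, 0 ≤ Z ω)
    (hZ_int : Integrable Z ℙ) (hexp_int : Integrable (fun ω ↦ exp (Z ω ^ γ)) ℙ) :
    exp ((∫ ω, Z ω ∂ℙ) ^ γ) ≤ exp (C ^ γ) * ∫ ω, exp (Z ω ^ γ) ∂ℙ := by
  have hbound (ω : Ω) : exp ((C + Z ω) ^ γ) ≤ exp (C ^ γ) * exp (Z ω ^ γ) :=
    exp_rpow_add_le_mul hC (hZ_nonneg ω) hγ0 hγ1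
  have hshift_int : Integrable (fun ω ↦ exp ((C + Z ω) ^ γ)) ℙ := by
    refine (hexp_int.const_mul (exp (C ^ γ))).mono' ?_ (.of_forall fun ω ↦ ?_)
    · exact (continuous_exp.comp (continuous_rpow_const hγ0)).comp_aestronglyMeasurable
        (aestronglyMeasurable_const.add hZ_int.aestronglyMeasurable)
    · rw [norm_of_nonneg (exp_pos _).le]
      exact hbound ω
  have hjensen : exp ((∫ ω, C + Z ω ∂ℙ) ^ γ) ≤ ∫ ω, exp ((C + Z ω) ^ γ) ∂ℙ :=
    (convexOn_exp_rpow hγ0 hC hCγ).map_integral_le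
      (continuous_exp.comp (continuous_rpow_const hγ0)).continuousOn isClosed_Ici
      (.of_forall fun ω ↦ le_add_of_nonneg_right (hZ_nonneg ω))
      ((integrable_const C).add hZ_int) hshift_int
  rw [integral_add (integrable_const C) hZ_int, integral_const, probReal_univ, one_smul]
    at hjensen
  calc exp ((∫ ω, Z ω ∂ℙ) ^ γ)
      ≤ exp ((C + ∫ ω, Z ω ∂ℙ) ^ γ) :=
        exp_le_exp.2 (rpow_le_rpow (integral_nonneg hZ_nonneg) (le_add_of_nonneg_left hC) hγ0)
    _ ≤ ∫ ω, exp ((C + Z ω) ^ γ) ∂ℙ := hjensen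
    _ ≤ ∫ ω, exp (C ^ γ) * exp (Z ω ^ γ) ∂ℙ :=
        integral_mono hshift_int (hexp_int.const_mul _) hbound
    _ = exp (C ^ γ) * ∫ ω, exp (Z ω ^ γ) ∂ℙ := integral_const_mul _ _

theorem stmt_1_general {Ω : Type*} [MeasurableSpace Ω] (ℙ : Measure Ω) [IsProbabilityMeasure ℙ]
    (γ C : ℝ) (hγ0 : 0 < γ) (hγ1 : γ < 1) (hC : 0 < C)
    (hCγ : γ * C ^ γ + γ - 1 ≥ 0)
    (Z : Ω → ℝ) (hZ_nonneg : ∀ ω, 0 ≤ Z ω)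
    (hZ_int : Integrable Z ℙ) :
    ENNReal.ofReal (Real.exp ((∫ ω, Z ω ∂ℙ) ^ γ)) ≤
      ENNReal.ofReal (Real.exp (C ^ γ)) *
        ∫⁻ ω, ENNReal.ofReal (Real.exp (Z ω ^ γ)) ∂ℙ := by
  by_cases hfin : ∫⁻ ω, ENNReal.ofReal (exp (Z ω ^ γ)) ∂ℙ = ⊤
  · rw [hfin, ENNReal.mul_top (by simp [exp_pos])]
    exact le_top
  have hexp_nonneg : 0 ≤ᵐ[ℙ] fun ω ↦ exp (Z ω ^ γ) := .of_forall fun ω ↦ (exp_pos _).le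
  have hexp_int : Integrable (fun ω ↦ exp (Z ω ^ γ)) ℙ :=
    ⟨(continuous_exp.comp (continuous_rpow_const hγ0.le)).comp_aestronglyMeasurable
        hZ_int.aestronglyMeasurable,
      (hasFiniteIntegral_iff_ofReal hexp_nonneg).2 (Ne.lt_top hfin)⟩
  rw [← ofReal_integral_eq_lintegral_ofReal hexp_int hexp_nonneg,
    ← ENNReal.ofReal_mul (exp_pos _).le]
  exact ENNReal.ofReal_le_ofReal
    (exp_rpow_integral_le hγ0.le hγ1.le hC.le hCγ hZ_nonneg hZ_int hexp_int)

theorem stmt_1 {Ω : Type*} [MeasurableSpace Ω] (ℙ : Measure Ω) [IsProbabilityMeasure ℙ]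
    (γ C : ℝ) (hγ0 : 0 < γ) (hγ1 : γ < 1) (hC : 0 < C)
    (hCγ : γ * C ^ γ + γ - 1 ≥ 0)
    (Z : Ω → ℝ) (hZ_meas : Measurable Z) (hZ_nonneg : ∀ ω, 0 ≤ Z ω)
    (hZ_int : Integrable Z ℙ) :
    ENNReal.ofReal (Real.exp ((∫ ω, Z ω ∂ℙ) ^ γ)) ≤
      ENNReal.ofReal (Real.exp (C ^ γ)) *
        ∫⁻ ω, ENNReal.ofReal (Real.exp (Z ω ^ γ)) ∂ℙ :=
  stmt_1_general ℙ γ C hγ0 hγ1 hC hCγ Z hZ_nonneg hZ_int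
end

section
/- Bihari's inequality: let f : [0,∞) → (0,∞) be continuous and nondecreasing, let h : [t₀, t₀+T] → [0,∞) be integrable, and let x : [t₀, t₀+T] → [0,∞) be continuous. Suppose x(t) ≤ α + ∫_{t₀}^t h(s) f(x(s)) ds for all t ∈ [t₀, t₀+T], where α > 0. Define G(u) = ∫_{α}^u dr / f(r). If G(α) + ∫_{t₀}^t h(s) ds lies in the range of G for all t, then x(t) ≤ G⁻¹(G(α) + ∫_{t₀}^t h(s) ds). -/
open MeasureTheory Set

/-! Let `y t = α + ∫_{t₀}^t h f(x)` be the majorant of `x`. Since `1 / f ≤ 1 / f α` on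
`[α, ∞)`, `G` is Lipschitz there, so `G ∘ y` is absolutely continuous, and almost everywhere
`(G ∘ y)' = h f(x) / f(y) ≤ h` because `x ≤ y` and `f` is monotone. Integrating gives
`G (y t) ≤ ∫_{t₀}^t h = G u`, and `G` is strictly increasing, so `x t ≤ y t ≤ u`. -/

theorem LipschitzOnWith.comp_absolutelyContinuousOnInterval {X Y : Type*} [PseudoMetricSpace X]
    [PseudoMetricSpace Y] {g : X → Y} {f : ℝ → X} {K : NNReal} {s : Set X} {a b : ℝ}
    (hg : LipschitzOnWith K g s) (hf : AbsolutelyContinuousOnInterval f a b)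
    (hfs : MapsTo f (uIcc a b) s) : AbsolutelyContinuousOnInterval (g ∘ f) a b := by
  rw [absolutelyContinuousOnInterval_iff] at hf ⊢
  intro ε hε
  obtain ⟨δ, hδ, hfδ⟩ := hf (ε / (K + 1)) (by positivity)
  refine ⟨δ, hδ, fun E hE hEδ => ?_⟩
  calc ∑ i ∈ Finset.range E.1, dist (g (f (E.2 i).1)) (g (f (E.2 i).2))
      ≤ ∑ i ∈ Finset.range E.1, K * dist (f (E.2 i).1) (f (E.2 i).2) :=
        Finset.sum_le_sum fun i hi => hg.dist_le_mul _ (hfs (hE.1 i hi).1) _ (hfs (hE.1 i hi).2)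
    _ = K * ∑ i ∈ Finset.range E.1, dist (f (E.2 i).1) (f (E.2 i).2) := (Finset.mul_sum ..).symm
    _ ≤ K * (ε / (K + 1)) := by gcongr; exact (hfδ E hE hEδ).le
    _ < ε := by
      rw [mul_div_assoc', div_lt_iff₀ (by positivity)]
      nlinarith

theorem AbsolutelyContinuousOnInterval.sub_le_integral_of_ae_deriv_le {φ g : ℝ → ℝ}
    {a b : ℝ} (hab : a ≤ b) (hφ : AbsolutelyContinuousOnInterval φ a b)
    (hg : IntervalIntegrable g volume a b) (hle : ∀ᵐ s, s ∈ Icc a b → deriv φ s ≤ g s) :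
    φ b - φ a ≤ ∫ s in a..b, g s := by
  rw [← hφ.integral_deriv_eq_sub]
  refine intervalIntegral.integral_mono_ae_restrict hab hφ.intervalIntegrable_deriv hg ?_
  rwa [Filter.EventuallyLE, ae_restrict_iff' measurableSet_Icc]

section IntegralOneDiv

variable {f : ℝ → ℝ} {c α : ℝ}

theorem intervalIntegrable_one_div_of_continuousOn_Ici (hf_cont : ContinuousOn f (Ici c))
    (hf_pos : ∀ u, c ≤ u → 0 < f u) {a b : ℝ} (ha : c ≤ a) (hb : c ≤ b) :
    IntervalIntegrable (fun r => 1 / f r) volume a b :=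
  ((continuousOn_const.div hf_cont fun r hr => (hf_pos r hr).ne').mono
    fun _ hr => le_trans (le_min ha hb) hr.1).intervalIntegrable

theorem strictMonoOn_integral_one_div (hf_cont : ContinuousOn f (Ici c))
    (hf_pos : ∀ u, c ≤ u → 0 < f u) (hα : c ≤ α) :
    StrictMonoOn (fun u => ∫ r in α..u, 1 / f r) (Ici c) := by
  intro a ha b hb hab
  have hint : ∀ {a b}, c ≤ a → c ≤ b → IntervalIntegrable (fun r => 1 / f r) volume a b :=
    intervalIntegrable_one_div_of_continuousOn_Ici hf_cont hf_pos
  rw [← sub_pos, intervalIntegral.integral_interval_sub_left (hint hα hb) (hint hα ha)]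
  exact intervalIntegral.intervalIntegral_pos_of_pos_on (hint ha hb)
    (fun r hr => one_div_pos.2 (hf_pos r (le_trans ha hr.1.le))) hab

theorem hasDerivAt_integral_one_div (hf_cont : ContinuousOn f (Ici c))
    (hf_pos : ∀ u, c ≤ u → 0 < f u) (hα : c ≤ α) {u : ℝ} (hu : c < u) :
    HasDerivAt (fun v => ∫ r in α..v, 1 / f r) (1 / f u) u := by
  have hcont : ContinuousOn (fun r => 1 / f r) (Ioi c) :=
    (continuousOn_const.div hf_cont fun r hr => (hf_pos r hr).ne').mono Ioi_subset_Ici_self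
  exact intervalIntegral.integral_hasDerivAt_right
    (intervalIntegrable_one_div_of_continuousOn_Ici hf_cont hf_pos hα hu.le)
    (hcont.stronglyMeasurableAtFilter isOpen_Ioi u hu) (hcont.continuousAt (Ioi_mem_nhds hu))

theorem lipschitzOnWith_integral_one_div (hf_cont : ContinuousOn f (Ici c))
    (hf_mono : MonotoneOn f (Ici c)) (hf_pos : ∀ u, c ≤ u → 0 < f u) (hα : c ≤ α) :
    LipschitzOnWith (Real.toNNReal (1 / f α)) (fun u => ∫ r in α..u, 1 / f r) (Ici α) := by
  have hint : ∀ {a b}, c ≤ a → c ≤ b → IntervalIntegrable (fun r => 1 / f r) volume a b :=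
    intervalIntegrable_one_div_of_continuousOn_Ici hf_cont hf_pos
  refine LipschitzOnWith.of_dist_le' fun a ha b hb => ?_
  rw [Real.dist_eq, Real.dist_eq, ← Real.norm_eq_abs,
    intervalIntegral.integral_interval_sub_left (hint hα (hα.trans ha)) (hint hα (hα.trans hb))]
  refine intervalIntegral.norm_integral_le_of_norm_le_const fun r hr => ?_
  have hαr : α ≤ r := le_trans (le_min hb ha) hr.1.le
  rw [Real.norm_of_nonneg (one_div_pos.2 (hf_pos r (hα.trans hαr))).le]
  exact one_div_le_one_div_of_le (hf_pos α hα) (hf_mono hα (hα.trans hαr) hαr)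

end IntegralOneDiv

theorem le_add_integral_mul_comp {f h x : ℝ → ℝ} {α t₀ t : ℝ} (ht : t₀ ≤ t)
    (hf_pos : ∀ u, 0 ≤ u → 0 < f u) (hh_nonneg : ∀ s, 0 ≤ h s)
    (hx_nonneg : ∀ s, 0 ≤ x s) : α ≤ α + ∫ s in t₀..t, h s * f (x s) :=
  le_add_of_nonneg_right <| intervalIntegral.integral_nonneg ht fun s _ =>
    mul_nonneg (hh_nonneg s) (hf_pos _ (hx_nonneg s)).le

theorem integral_one_div_majorant_le {f h x : ℝ → ℝ} {α t₀ t : ℝ} (hα : 0 < α)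
    (ht : t₀ ≤ t) (hf_cont : ContinuousOn f (Ici 0)) (hf_mono : MonotoneOn f (Ici 0))
    (hf_pos : ∀ u, 0 ≤ u → 0 < f u) (hh_nonneg : ∀ s, 0 ≤ h s)
    (hh : IntervalIntegrable h volume t₀ t)
    (hhfx : IntervalIntegrable (fun s => h s * f (x s)) volume t₀ t)
    (hx_nonneg : ∀ s, 0 ≤ x s)
    (hxy : ∀ s ∈ Icc t₀ t, x s ≤ α + ∫ τ in t₀..s, h τ * f (x τ)) :
    ∫ r in α..(α + ∫ s in t₀..t, h s * f (x s)), 1 / f r ≤ ∫ s in t₀..t, h s := by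
  set y : ℝ → ℝ := fun s => α + ∫ τ in t₀..s, h τ * f (x τ)
  set G : ℝ → ℝ := fun u => ∫ r in α..u, 1 / f r
  have hyα : ∀ s ∈ Icc t₀ t, α ≤ y s := fun s hs =>
    le_add_integral_mul_comp hs.1 hf_pos hh_nonneg hx_nonneg
  have hy : AbsolutelyContinuousOnInterval y t₀ t :=
    (LipschitzWith.const α).lipschitzOnWith.absolutelyContinuousOnInterval.fun_add
      (hhfx.absolutelyContinuousOnInterval_intervalIntegral left_mem_uIcc)
  have hGy : AbsolutelyContinuousOnInterval (G ∘ y) t₀ t :=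
    (lipschitzOnWith_integral_one_div hf_cont hf_mono hf_pos
      hα.le).comp_absolutelyContinuousOnInterval hy fun s hs => hyα s (uIcc_of_le ht ▸ hs)
  have hderiv : ∀ᵐ s, s ∈ Icc t₀ t → deriv (G ∘ y) s ≤ h s := by
    filter_upwards [hhfx.ae_hasDerivAt_integral] with s hprim hsI
    have hys : HasDerivAt y (h s * f (x s)) s :=
      (hprim (uIcc_of_le ht ▸ hsI) t₀ left_mem_uIcc).const_add α
    have hys0 : 0 < y s := hα.trans_le (hyα s hsI)
    rw [((hasDerivAt_integral_one_div hf_cont hf_pos hα.le hys0).comp s hys).deriv]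
    have hfxy : f (x s) ≤ f (y s) := hf_mono (hx_nonneg s) hys0.le (hxy s hsI)
    calc 1 / f (y s) * (h s * f (x s)) = h s * (f (x s) / f (y s)) := by ring
      _ ≤ h s * 1 := by
        gcongr
        · exact hh_nonneg s
        · exact div_le_one_of_le₀ hfxy (hf_pos _ hys0.le).le
      _ = h s := mul_one _
  simpa [G, y] using hGy.sub_le_integral_of_ae_deriv_le ht hh hderiv

theorem stmt_2_general (t₀ T α : ℝ) (hα : 0 < α)
    (f : ℝ → ℝ) (hf_cont : ContinuousOn f (Set.Ici 0))
    (hf_mono : MonotoneOn f (Set.Ici 0))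
    (hf_pos : ∀ u, 0 ≤ u → 0 < f u)
    (h : ℝ → ℝ) (hh_nonneg : ∀ s, 0 ≤ h s)
    (hh_int : IntegrableOn h (Set.Icc t₀ (t₀ + T)))
    (x : ℝ → ℝ) (hx_cont : ContinuousOn x (Set.Icc t₀ (t₀ + T)))
    (hx_nonneg : ∀ t, 0 ≤ x t)
    (hineq : ∀ t ∈ Set.Icc t₀ (t₀ + T), x t ≤ α + ∫ s in t₀..t, h s * f (x s))
    (G : ℝ → ℝ) (hG : ∀ u, G u = ∫ r in α..u, 1 / f r) :
    ∀ t ∈ Set.Icc t₀ (t₀ + T), ∀ u, 0 ≤ u →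
      G u = G α + ∫ s in t₀..t, h s → x t ≤ u := by
  intro t ht u hu hGu
  rw [hG, hG, intervalIntegral.integral_same, zero_add] at hGu
  have hhfx : IntegrableOn (fun s => h s * f (x s)) (Icc t₀ (t₀ + T)) :=
    hh_int.mul_continuousOn (hf_cont.comp hx_cont fun s _ => hx_nonneg s) isCompact_Icc
  have hsub : uIcc t₀ t ⊆ Icc t₀ (t₀ + T) :=
    uIcc_subset_Icc (left_mem_Icc.2 (ht.1.trans ht.2)) ht
  have hmaj := integral_one_div_majorant_le hα ht.1 hf_cont hf_mono hf_pos hh_nonneg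
    (hh_int.mono_set hsub).intervalIntegrable (hhfx.mono_set hsub).intervalIntegrable hx_nonneg
    fun s hs => hineq s ⟨hs.1, hs.2.trans ht.2⟩
  have hyt := le_add_integral_mul_comp ht.1 hf_pos hh_nonneg hx_nonneg (α := α)
  exact (hineq t ht).trans <|
    ((strictMonoOn_integral_one_div hf_cont hf_pos hα.le).le_iff_le (hα.le.trans hyt) hu).1
      (hmaj.trans_eq hGu.symm)

/-- Bihari's inequality. -/
theorem stmt_2 (t₀ T α : ℝ) (hT : 0 ≤ T) (hα : 0 < α)
    (f : ℝ → ℝ) (hf_cont : ContinuousOn f (Set.Ici 0))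
    (hf_mono : MonotoneOn f (Set.Ici 0))
    (hf_pos : ∀ u, 0 ≤ u → 0 < f u)
    (h : ℝ → ℝ) (hh_nonneg : ∀ s, 0 ≤ h s)
    (hh_int : IntegrableOn h (Set.Icc t₀ (t₀ + T)))
    (x : ℝ → ℝ) (hx_cont : ContinuousOn x (Set.Icc t₀ (t₀ + T)))
    (hx_nonneg : ∀ t, 0 ≤ x t)
    (hineq : ∀ t ∈ Set.Icc t₀ (t₀ + T), x t ≤ α + ∫ s in t₀..t, h s * f (x s))
    (G : ℝ → ℝ) (hG : ∀ u, G u = ∫ r in α..u, 1 / f r)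
    (hrange : ∀ t ∈ Set.Icc t₀ (t₀ + T),
      ∃ u, 0 ≤ u ∧ G u = G α + ∫ s in t₀..t, h s) :
    ∀ t ∈ Set.Icc t₀ (t₀ + T), ∀ u, 0 ≤ u →
      G u = G α + ∫ s in t₀..t, h s → x t ≤ u :=
  stmt_2_general t₀ T α hα f hf_cont hf_mono hf_pos h hh_nonneg hh_int x hx_cont hx_nonneg hineq G
    hG
end

section
/- If B : ℝᵈ × 𝒫₁(ℝᵈ) → ℝᵈ is defined by B(x, μ) = ∫ b(x, z) dμ(z), where b : ℝᵈ × ℝᵈ → ℝᵈ satisfies |b(x,z) - b(y,z')| ≤ f(|x-y| + |z-z'|) for a concave, nondecreasing, subadditive modulus of continuity f with f(0)=0, then |B(x,μ) - B(y,ν)| ≤ f(|x-y|) + f(d₁(μ,ν)) for all x,y ∈ ℝᵈ and μ,ν ∈ 𝒫₁(ℝᵈ). -/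
open MeasureTheory

/-- A coupling of two measures. -/
def IsCoupling {E : Type*} [MeasurableSpace E]
    (m : Measure (E × E)) (μ ν : Measure E) : Prop :=
  Measure.map Prod.fst m = μ ∧ Measure.map Prod.snd m = ν

/-- The `p`-Wasserstein distance. -/
noncomputable def wassersteinDist {E : Type*} [MeasurableSpace E] [NormedAddCommGroup E]
    (p : ℝ) (μ ν : Measure E) : ℝ :=
  sInf {c : ℝ | ∃ m : Measure (E × E), IsProbabilityMeasure m ∧ IsCoupling m μ ν ∧
    c = (∫ z, ‖z.1 - z.2‖ ^ p ∂m) ^ (1 / p)}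


/-- Supporting line of a concave function on `Ici 0` at an interior point `s > 0`. -/
lemma my_supporting_line (f : ℝ → ℝ) (hconc : ConcaveOn ℝ (Set.Ici 0) f) {s : ℝ}
    (hs : 0 < s) : ∃ k : ℝ, ∀ t, 0 ≤ t → f t ≤ f s + k * (t - s) := by
  set A : Set ℝ := (fun t => (f s - f t) / (s - t)) '' Set.Ico 0 s with hA
  have hAne : A.Nonempty := ⟨_, ⟨0, ⟨le_refl 0, hs⟩, rfl⟩⟩
  have hlow : ∀ a ∈ A, (f (2 * s) - f s) / (2 * s - s) ≤ a := by
    rintro a ⟨t, ⟨ht0, hts⟩, rfl⟩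
    exact hconc.slope_anti_adjacent ht0 (by positivity : (0:ℝ) ≤ 2 * s) hts (by linarith)
  have hbdd : BddBelow A := ⟨_, hlow⟩
  refine ⟨sInf A, fun t ht => ?_⟩
  rcases lt_trichotomy t s with h | h | h
  · have h1 : sInf A ≤ (f s - f t) / (s - t) := csInf_le hbdd ⟨t, ⟨ht, h⟩, rfl⟩
    rw [le_div_iff₀ (by linarith)] at h1
    nlinarith
  · subst h; simp
  · have h1 : (f t - f s) / (t - s) ≤ sInf A := by
      refine le_csInf hAne ?_
      rintro a ⟨u, ⟨hu0, hus⟩, rfl⟩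
      exact hconc.slope_anti_adjacent hu0 (Set.mem_Ici.mpr ht) hus h
    rw [div_le_iff₀ (by linarith)] at h1
    linarith

/-- Jensen's inequality for a concave nondecreasing modulus on `Ici 0`,
with integrability of the composition as a bonus. -/
lemma my_jensen {α : Type*} [MeasurableSpace α] (m : Measure α) [IsProbabilityMeasure m]
    (f : ℝ → ℝ) (hf0 : f 0 = 0) (hconc : ConcaveOn ℝ (Set.Ici 0) f)
    (hmono : MonotoneOn f (Set.Ici 0)) (g : α → ℝ) (hg0 : ∀ a, 0 ≤ g a)
    (hgi : Integrable g m) :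
    Integrable (fun a => f (g a)) m ∧ ∫ a, f (g a) ∂m ≤ f (∫ a, g a ∂m) := by
  have hfg_eq : (fun a => f (g a)) = fun a => f (max (g a) 0) := by
    funext a; rw [max_eq_left (hg0 a)]
  have hF : Measurable fun t : ℝ => f (max t 0) := by
    refine Monotone.measurable (fun t t' h => ?_)
    exact hmono (Set.mem_Ici.mpr (le_max_right _ _)) (Set.mem_Ici.mpr (le_max_right _ _))
      (max_le_max h (le_refl 0))
  have hfg_meas : AEStronglyMeasurable (fun a => f (g a)) m := by
    rw [hfg_eq]
    exact (hF.comp_aemeasurable hgi.aemeasurable).aestronglyMeasurable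
  have hfg0 : ∀ a, 0 ≤ f (g a) := fun a => by
    have := hmono (Set.mem_Ici.mpr (le_refl (0:ℝ))) (Set.mem_Ici.mpr (hg0 a)) (hg0 a)
    rwa [hf0] at this
  set s := ∫ a, g a ∂m with hsdef
  have hs0 : 0 ≤ s := integral_nonneg hg0
  rcases hs0.eq_or_lt with hs | hs
  · -- s = 0 : g = 0 a.e.
    have hz : g =ᵐ[m] 0 := (integral_eq_zero_iff_of_nonneg hg0 hgi).mp hs.symm
    have h2 : (fun a => f (g a)) =ᵐ[m] fun _ => (0:ℝ) := by
      filter_upwards [hz] with a ha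
      simp only [Pi.zero_apply] at ha
      rw [ha, hf0]
    refine ⟨(integrable_const (0:ℝ)).congr h2.symm, ?_⟩
    rw [integral_congr_ae h2, integral_const, ← hs, hf0]
    simp
  · obtain ⟨k, hk⟩ := my_supporting_line f hconc hs
    have hhi : Integrable (fun a => f s + k * (g a - s)) m :=
      (integrable_const _).add ((hgi.sub (integrable_const s)).const_mul k)
    have hbound : ∀ a, ‖f (g a)‖ ≤ f s + k * (g a - s) := fun a => by
      rw [Real.norm_eq_abs, abs_of_nonneg (hfg0 a)]
      exact hk _ (hg0 a)
    have hint : Integrable (fun a => f (g a)) m :=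
      hhi.mono' hfg_meas (Filter.Eventually.of_forall hbound)
    refine ⟨hint, ?_⟩
    calc ∫ a, f (g a) ∂m ≤ ∫ a, (f s + k * (g a - s)) ∂m :=
          integral_mono hint hhi fun a => hk _ (hg0 a)
      _ = f s := by
          have h1 : ∫ a, (f s + k * (g a - s)) ∂m
              = (∫ _a, f s ∂m) + ∫ a, k * (g a - s) ∂m :=
            integral_add (integrable_const _) ((hgi.sub (integrable_const s)).const_mul k)
          have h2 : ∫ a, k * (g a - s) ∂m = k * ((∫ a, g a ∂m) - s) := by
            rw [integral_const_mul, integral_sub hgi (integrable_const s), integral_const]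
            simp
          rw [h1, h2, integral_const]
          simp [← hsdef]

/-- The key estimate for a single coupling. -/
lemma my_coupling_bound {E : Type*} [MeasurableSpace E] [NormedAddCommGroup E]
    [NormedSpace ℝ E] [CompleteSpace E] [BorelSpace E] [SecondCountableTopology E]
    (f : ℝ → ℝ) (hf0 : f 0 = 0) (hconc : ConcaveOn ℝ (Set.Ici 0) f)
    (hmono : MonotoneOn f (Set.Ici 0))
    (hsub : ∀ u v, 0 ≤ u → 0 ≤ v → f (u + v) ≤ f u + f v)
    (b : E → E → E) (hb : ∀ x y z z', ‖b x z - b y z'‖ ≤ f (‖x - y‖ + ‖z - z'‖))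
    (μ ν : Measure E) [IsProbabilityMeasure μ] [IsProbabilityMeasure ν]
    (hμ : Integrable (fun z => ‖z‖) μ) (hν : Integrable (fun z => ‖z‖) ν)
    (hbμ : ∀ x, Integrable (fun z => b x z) μ) (hbν : ∀ x, Integrable (fun z => b x z) ν)
    (x y : E) (m : Measure (E × E)) [IsProbabilityMeasure m] (hm : IsCoupling m μ ν) :
    ‖(∫ z, b x z ∂μ) - ∫ z, b y z ∂ν‖ ≤ f ‖x - y‖ + f (∫ p : E × E, ‖p.1 - p.2‖ ∂m) := by
  have hmx : Integrable (fun p : E × E => b x p.1) m := by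
    have h := hbμ x
    rw [← hm.1] at h
    exact (integrable_map_measure h.aestronglyMeasurable measurable_fst.aemeasurable).mp h
  have hmy : Integrable (fun p : E × E => b y p.2) m := by
    have h := hbν y
    rw [← hm.2] at h
    exact (integrable_map_measure h.aestronglyMeasurable measurable_snd.aemeasurable).mp h
  have e1 : ∫ z, b x z ∂μ = ∫ p : E × E, b x p.1 ∂m := by
    rw [← hm.1]
    exact integral_map measurable_fst.aemeasurable
      (by rw [hm.1]; exact (hbμ x).aestronglyMeasurable)
  have e2 : ∫ z, b y z ∂ν = ∫ p : E × E, b y p.2 ∂m := by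
    rw [← hm.2]
    exact integral_map measurable_snd.aemeasurable
      (by rw [hm.2]; exact (hbν y).aestronglyMeasurable)
  have hn1 : Integrable (fun p : E × E => ‖p.1‖) m := by
    have h := hμ
    rw [← hm.1] at h
    exact (integrable_map_measure h.aestronglyMeasurable measurable_fst.aemeasurable).mp h
  have hn2 : Integrable (fun p : E × E => ‖p.2‖) m := by
    have h := hν
    rw [← hm.2] at h
    exact (integrable_map_measure h.aestronglyMeasurable measurable_snd.aemeasurable).mp h
  have hdist : Integrable (fun p : E × E => ‖p.1 - p.2‖) m := by
    refine (hn1.add hn2).mono'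
      ((continuous_fst.sub continuous_snd).norm.aestronglyMeasurable) ?_
    refine Filter.Eventually.of_forall fun p => ?_
    rw [norm_norm]
    exact norm_sub_le _ _
  have hg0 : ∀ p : E × E, 0 ≤ ‖x - y‖ + ‖p.1 - p.2‖ :=
    fun p => add_nonneg (norm_nonneg _) (norm_nonneg _)
  have hgi : Integrable (fun p : E × E => ‖x - y‖ + ‖p.1 - p.2‖) m :=
    (integrable_const _).add hdist
  obtain ⟨hfgi, hjen⟩ := my_jensen m f hf0 hconc hmono _ hg0 hgi
  have hgint : ∫ p : E × E, (‖x - y‖ + ‖p.1 - p.2‖) ∂m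
      = ‖x - y‖ + ∫ p : E × E, ‖p.1 - p.2‖ ∂m := by
    rw [integral_add (integrable_const _) hdist, integral_const]
    simp
  calc ‖(∫ z, b x z ∂μ) - ∫ z, b y z ∂ν‖
      = ‖∫ p : E × E, (b x p.1 - b y p.2) ∂m‖ := by rw [e1, e2, integral_sub hmx hmy]
    _ ≤ ∫ p : E × E, ‖b x p.1 - b y p.2‖ ∂m := norm_integral_le_integral_norm _
    _ ≤ ∫ p : E × E, f (‖x - y‖ + ‖p.1 - p.2‖) ∂m :=
        integral_mono (hmx.sub hmy).norm hfgi fun p => hb x y p.1 p.2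
    _ ≤ f (‖x - y‖ + ∫ p : E × E, ‖p.1 - p.2‖ ∂m) := hjen.trans_eq (by rw [hgint])
    _ ≤ f ‖x - y‖ + f (∫ p : E × E, ‖p.1 - p.2‖ ∂m) :=
        hsub _ _ (norm_nonneg _) (integral_nonneg fun p => norm_nonneg _)


/-- If there are couplings of arbitrarily small transport cost, the measures are equal. -/
lemma my_eq_of_small_couplings {E : Type*} [MeasurableSpace E] [NormedAddCommGroup E]
    [NormedSpace ℝ E] [BorelSpace E] [SecondCountableTopology E]
    (μ ν : Measure E) [IsProbabilityMeasure μ] [IsProbabilityMeasure ν]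
    (hμ : Integrable (fun z => ‖z‖) μ) (hν : Integrable (fun z => ‖z‖) ν)
    (h : ∀ ε : ℝ, 0 < ε → ∃ m : Measure (E × E), IsProbabilityMeasure m ∧ IsCoupling m μ ν ∧
      ∫ p : E × E, ‖p.1 - p.2‖ ∂m < ε) : μ = ν := by
  -- Step A: integrals of bounded Lipschitz functions agree
  have key : ∀ (g : E → ℝ) (K C : ℝ), 0 ≤ K → Continuous g → (∀ z, |g z| ≤ C) →
      (∀ z z', |g z - g z'| ≤ K * ‖z - z'‖) → ∫ z, g z ∂μ = ∫ z, g z ∂ν := by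
    intro g K C hK hgc hgb hgl
    have hgiμ : Integrable g μ := (integrable_const C).mono' hgc.aestronglyMeasurable
      (Filter.Eventually.of_forall fun z => by rw [Real.norm_eq_abs]; exact hgb z)
    have hgiν : Integrable g ν := (integrable_const C).mono' hgc.aestronglyMeasurable
      (Filter.Eventually.of_forall fun z => by rw [Real.norm_eq_abs]; exact hgb z)
    have habs : ∀ ε : ℝ, 0 < ε → |(∫ z, g z ∂μ) - ∫ z, g z ∂ν| ≤ ε := by
      intro ε hε
      obtain ⟨m, hmp, hm, hmε⟩ := h (ε / (K + 1)) (by positivity)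
      have h1 : Integrable (fun p : E × E => g p.1) m := by
        have hh := hgiμ; rw [← hm.1] at hh
        exact (integrable_map_measure hh.aestronglyMeasurable measurable_fst.aemeasurable).mp hh
      have h2 : Integrable (fun p : E × E => g p.2) m := by
        have hh := hgiν; rw [← hm.2] at hh
        exact (integrable_map_measure hh.aestronglyMeasurable measurable_snd.aemeasurable).mp hh
      have e1 : ∫ z, g z ∂μ = ∫ p : E × E, g p.1 ∂m := by
        rw [← hm.1]
        exact integral_map measurable_fst.aemeasurable
          (by rw [hm.1]; exact hgc.aestronglyMeasurable)
      have e2 : ∫ z, g z ∂ν = ∫ p : E × E, g p.2 ∂m := by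
        rw [← hm.2]
        exact integral_map measurable_snd.aemeasurable
          (by rw [hm.2]; exact hgc.aestronglyMeasurable)
      have hn1 : Integrable (fun p : E × E => ‖p.1‖) m := by
        have hh := hμ; rw [← hm.1] at hh
        exact (integrable_map_measure hh.aestronglyMeasurable measurable_fst.aemeasurable).mp hh
      have hn2 : Integrable (fun p : E × E => ‖p.2‖) m := by
        have hh := hν; rw [← hm.2] at hh
        exact (integrable_map_measure hh.aestronglyMeasurable measurable_snd.aemeasurable).mp hh
      have hdist : Integrable (fun p : E × E => ‖p.1 - p.2‖) m := by
        refine (hn1.add hn2).mono'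
          ((continuous_fst.sub continuous_snd).norm.aestronglyMeasurable) ?_
        refine Filter.Eventually.of_forall fun p => ?_
        rw [norm_norm]
        exact norm_sub_le _ _
      have hdistnn : 0 ≤ ∫ p : E × E, ‖p.1 - p.2‖ ∂m := integral_nonneg fun p => norm_nonneg _
      calc |(∫ z, g z ∂μ) - ∫ z, g z ∂ν| = |∫ p : E × E, (g p.1 - g p.2) ∂m| := by
            rw [e1, e2, integral_sub h1 h2]
        _ ≤ ∫ p : E × E, |g p.1 - g p.2| ∂m := by
            simpa [Real.norm_eq_abs] using norm_integral_le_integral_norm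
              (fun p : E × E => g p.1 - g p.2) (μ := m)
        _ ≤ ∫ p : E × E, K * ‖p.1 - p.2‖ ∂m :=
            integral_mono (h1.sub h2).abs (hdist.const_mul K) fun p => hgl _ _
        _ = K * ∫ p : E × E, ‖p.1 - p.2‖ ∂m := integral_const_mul _ _
        _ ≤ K * (ε / (K + 1)) := mul_le_mul_of_nonneg_left hmε.le hK
        _ ≤ ε := by
            rw [mul_div_assoc']
            rw [div_le_iff₀ (by positivity)]
            nlinarith
    have h0 : |(∫ z, g z ∂μ) - ∫ z, g z ∂ν| ≤ 0 := by
      refine le_of_forall_pos_le_add fun ε hε => ?_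
      simpa using habs ε hε
    have := abs_nonpos_iff.mp h0
    linarith [sub_eq_zero.mp this]
  -- Step B: closed sets
  have hclosed : ∀ F : Set E, IsClosed F → μ F = ν F := by
    intro F hF
    rcases F.eq_empty_or_nonempty with rfl | hFne
    · simp
    have hTen : ∀ (ρ : Measure E), IsProbabilityMeasure ρ →
        Filter.Tendsto (fun n : ℕ => ∫ z, max (1 - n * Metric.infDist z F) 0 ∂ρ)
          Filter.atTop (nhds ((ρ F).toReal)) := by
      intro ρ hρ
      have hlim : Filter.Tendsto (fun n : ℕ => ∫ z, max (1 - n * Metric.infDist z F) 0 ∂ρ)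
          Filter.atTop (nhds (∫ z, Set.indicator F (fun _ => (1:ℝ)) z ∂ρ)) := by
        refine tendsto_integral_of_dominated_convergence (fun _ => (1:ℝ))
          (fun n => ((continuous_const.sub
            ((continuous_const.mul (Metric.continuous_infDist_pt F)))).max
            continuous_const).aestronglyMeasurable)
          (integrable_const 1) (fun n => Filter.Eventually.of_forall fun z => ?_)
          (Filter.Eventually.of_forall fun z => ?_)
        · rw [Real.norm_eq_abs, abs_of_nonneg (le_max_right _ _)]
          refine max_le ?_ one_pos.le
          have h1 : 0 ≤ (n : ℝ) * Metric.infDist z F :=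
            mul_nonneg (Nat.cast_nonneg n) Metric.infDist_nonneg
          show (1:ℝ) - ↑n * Metric.infDist z F ≤ 1
          linarith
        · by_cases hz : z ∈ F
          · have hd : Metric.infDist z F = 0 := Metric.infDist_zero_of_mem hz
            simp [hd, Set.indicator_of_mem hz]
          · have hd : 0 < Metric.infDist z F := (hF.notMem_iff_infDist_pos hFne).mp hz
            rw [Set.indicator_of_notMem hz]
            obtain ⟨N, hN⟩ := exists_nat_ge (1 / Metric.infDist z F)
            refine Filter.Tendsto.congr' ?_ tendsto_const_nhds
            filter_upwards [Filter.eventually_ge_atTop N] with n hn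
            have h1 : (1:ℝ) ≤ n * Metric.infDist z F := by
              rw [div_le_iff₀ hd] at hN
              calc (1:ℝ) ≤ N * Metric.infDist z F := hN
                _ ≤ n * Metric.infDist z F := by
                    have : (N:ℝ) ≤ n := Nat.cast_le.mpr hn
                    nlinarith
            simp only [max_eq_right (by linarith : 1 - (n:ℝ) * Metric.infDist z F ≤ 0)]
      rwa [integral_indicator_const _ hF.measurableSet, smul_eq_mul, mul_one] at hlim
    have hint : ∀ n : ℕ, ∫ z, max (1 - n * Metric.infDist z F) 0 ∂μ
        = ∫ z, max (1 - n * Metric.infDist z F) 0 ∂ν := by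
      intro n
      refine key _ n 1 (Nat.cast_nonneg n)
        ((continuous_const.sub
          ((continuous_const.mul (Metric.continuous_infDist_pt F)))).max continuous_const)
        (fun z => ?_) (fun z z' => ?_)
      · rw [abs_of_nonneg (le_max_right _ _)]
        refine max_le ?_ one_pos.le
        have h1 : 0 ≤ (n : ℝ) * Metric.infDist z F :=
          mul_nonneg (Nat.cast_nonneg n) Metric.infDist_nonneg
        linarith
      · calc |max (1 - n * Metric.infDist z F) 0 - max (1 - n * Metric.infDist z' F) 0|
            ≤ |(1 - n * Metric.infDist z F) - (1 - n * Metric.infDist z' F)| :=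
              abs_max_sub_max_le_abs _ _ _
          _ = n * |Metric.infDist z' F - Metric.infDist z F| := by
              rw [show (1 - (n:ℝ) * Metric.infDist z F) - (1 - (n:ℝ) * Metric.infDist z' F)
                  = (n:ℝ) * (Metric.infDist z' F - Metric.infDist z F) by ring,
                abs_mul, abs_of_nonneg (Nat.cast_nonneg (α := ℝ) n)]
          _ ≤ n * ‖z - z'‖ := by
              refine mul_le_mul_of_nonneg_left ?_ (Nat.cast_nonneg n)
              rw [abs_sub_le_iff, ← dist_eq_norm]
              constructor
              · linarith [Metric.infDist_le_infDist_add_dist (x := z') (y := z) (s := F),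
                  dist_comm z z']
              · linarith [Metric.infDist_le_infDist_add_dist (x := z) (y := z') (s := F)]
    have := tendsto_nhds_unique
      ((hTen μ inferInstance).congr fun n => hint n) (hTen ν inferInstance)
    exact (ENNReal.toReal_eq_toReal_iff' (measure_ne_top μ F) (measure_ne_top ν F)).mp this
  -- Step C: π-system extension
  refine ext_of_generate_finite {F : Set E | IsClosed F} ?_ isPiSystem_isClosed
    (fun s hs => hclosed s hs) (hclosed _ isClosed_univ)
  rw [BorelSpace.measurable_eq (α := E), borel_eq_generateFrom_isClosed]

theorem stmt_6 {d : ℕ}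
    (f : ℝ → ℝ) (hf0 : f 0 = 0)
    (hf_conc : ConcaveOn ℝ (Set.Ici 0) f)
    (hf_mono : MonotoneOn f (Set.Ici 0))
    (hf_subadd : ∀ u v, 0 ≤ u → 0 ≤ v → f (u + v) ≤ f u + f v)
    (b : EuclideanSpace ℝ (Fin d) → EuclideanSpace ℝ (Fin d) → EuclideanSpace ℝ (Fin d))
    (hb : ∀ x y z z', ‖b x z - b y z'‖ ≤ f (‖x - y‖ + ‖z - z'‖))
    (μ ν : Measure (EuclideanSpace ℝ (Fin d)))
    [IsProbabilityMeasure μ] [IsProbabilityMeasure ν]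
    (hμ : Integrable (fun z => ‖z‖) μ) (hν : Integrable (fun z => ‖z‖) ν)
    (hbμ : ∀ x, Integrable (fun z => b x z) μ)
    (hbν : ∀ x, Integrable (fun z => b x z) ν)
    (x y : EuclideanSpace ℝ (Fin d)) :
    ‖(∫ z, b x z ∂μ) - ∫ z, b y z ∂ν‖ ≤ f ‖x - y‖ + f (wassersteinDist 1 μ ν) := by
  classical
  set S : Set ℝ := {c : ℝ | ∃ m : Measure ((EuclideanSpace ℝ (Fin d)) × (EuclideanSpace ℝ (Fin d))), IsProbabilityMeasure m ∧ IsCoupling m μ ν ∧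
      c = ∫ p : (EuclideanSpace ℝ (Fin d)) × (EuclideanSpace ℝ (Fin d)), ‖p.1 - p.2‖ ∂m} with hS
  have hWS : wassersteinDist 1 μ ν = sInf S := by
    rw [wassersteinDist]
    apply congrArg sInf
    ext c
    simp [Real.rpow_one, hS]
  have hne : S.Nonempty := by
    refine ⟨∫ p : (EuclideanSpace ℝ (Fin d)) × (EuclideanSpace ℝ (Fin d)), ‖p.1 - p.2‖ ∂(μ.prod ν), μ.prod ν, inferInstance, ⟨?_, ?_⟩, rfl⟩
    · simp [Measure.map_fst_prod, measure_univ]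
    · simp [Measure.map_snd_prod, measure_univ]
  have hlb : ∀ c ∈ S, (0:ℝ) ≤ c := by
    rintro c ⟨m, hm1, hm2, rfl⟩
    exact integral_nonneg fun p => norm_nonneg _
  have hbdd : BddBelow S := ⟨0, fun c hc => hlb c hc⟩
  have hW0 : (0:ℝ) ≤ sInf S := le_csInf hne hlb
  have hkey : ∀ c ∈ S, ‖(∫ z, b x z ∂μ) - ∫ z, b y z ∂ν‖ ≤ f ‖x - y‖ + f c := by
    rintro c ⟨m, hm1, hm2, rfl⟩
    haveI := hm1
    exact my_coupling_bound f hf0 hf_conc hf_mono hf_subadd b hb μ ν hμ hν hbμ hbν x y m hm2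
  rw [hWS]
  rcases hW0.eq_or_lt with h0 | hpos
  · -- infimum is zero: the measures are equal
    have hμν : μ = ν := by
      refine my_eq_of_small_couplings μ ν hμ hν fun ε hε => ?_
      have hlt : sInf S < ε := by rw [← h0]; exact hε
      obtain ⟨c, hcS, hc⟩ := exists_lt_of_csInf_lt hne hlt
      obtain ⟨m, hm1, hm2, rfl⟩ := hcS
      exact ⟨m, hm1, hm2, hc⟩
    rw [← h0, hf0, add_zero, hμν]
    have h1 := hbν x
    have h2 := hbν y
    calc ‖(∫ z, b x z ∂ν) - ∫ z, b y z ∂ν‖ = ‖∫ z, (b x z - b y z) ∂ν‖ := by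
          rw [integral_sub h1 h2]
      _ ≤ ∫ z, ‖b x z - b y z‖ ∂ν := norm_integral_le_integral_norm _
      _ ≤ ∫ _z, f ‖x - y‖ ∂ν := by
          refine integral_mono (h1.sub h2).norm (integrable_const _) fun z => ?_
          simpa using hb x y z z
      _ = f ‖x - y‖ := by rw [integral_const]; simp
  · -- positive infimum: use continuity of `f` at the infimum
    have hcont : ContinuousAt f (sInf S) := by
      have h1 : ContinuousOn f (interior (Set.Ici (0:ℝ))) := hf_conc.continuousOn_interior
      rw [interior_Ici] at h1
      exact h1.continuousAt (Ioi_mem_nhds hpos)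
    refine le_of_forall_pos_le_add fun δ hδ => ?_
    rw [Metric.continuousAt_iff] at hcont
    obtain ⟨η, hη, hball⟩ := hcont δ hδ
    obtain ⟨c, hcS, hclt⟩ := exists_lt_of_csInf_lt hne (lt_add_of_pos_right (sInf S) hη)
    have hcge : sInf S ≤ c := csInf_le hbdd hcS
    have hdist : dist c (sInf S) < η := by
      rw [Real.dist_eq, abs_of_nonneg (by linarith)]
      linarith
    have hfc : f c ≤ f (sInf S) + δ := by
      have := hball hdist
      rw [Real.dist_eq] at this
      have h2 := (abs_lt.mp this).2
      linarith
    calc ‖(∫ z, b x z ∂μ) - ∫ z, b y z ∂ν‖ ≤ f ‖x - y‖ + f c := hkey c hcS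
      _ ≤ f ‖x - y‖ + f (sInf S) + δ := by linarith
end

section
/- If b : ℝᵈ × ℝᵈ → ℝᵈ satisfies |b(x,x') - b(y,y')| ≤ g·(|x-y| + |x'-y'|)·(1 + |x|^α + |y|^α + |x'|^α + |y'|^α) for some g ≥ 0, α > 0, then with p = α + 1, the drift B(x,μ) = ∫ b(x,x') dμ(x') satisfies |B(x,μ) - B(y,ν)| ≤ g·(|x-y| + d_p(μ,ν))·(1 + |x|^α + |y|^α + ‖μ‖_p^α + ‖ν‖_p^α) for all μ, ν ∈ 𝒫_p(ℝᵈ). -/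
/-!
Fix a coupling `m` of `μ` and `ν`. Then `B(x, μ) - B(y, ν) = ∫ (b(x, x') - b(y, y')) dm`, and
the hypothesis on `b` bounds its norm by `g ∫ G F dm` with `G = |x - y| + |x' - y'|` and
`F = 1 + |x|^α + |y|^α + |x'|^α + |y'|^α`. Hölder's inequality with exponents `p = α + 1` and
`p / α` gives `g ‖G‖_p ‖F‖_{p/α}`; by Minkowski `‖G‖_p ≤ |x - y| + ‖x' - y'‖_p` and
`‖F‖_{p/α} ≤ 1 + |x|^α + |y|^α + ‖μ‖_p^α + ‖ν‖_p^α`, because `‖|x'|^α‖_{p/α} = ‖x'‖_p^α`.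
Taking the infimum over couplings gives the claim. The estimates are done with the
`[0, ∞]`-valued seminorms `eLpNorm`, which need no integrability side conditions.
-/

open MeasureTheory

/-- The `p`-th moment norm `‖μ‖_p`. -/
noncomputable def momentP {E : Type*} [MeasurableSpace E] [NormedAddCommGroup E]
    (p : ℝ) (μ : Measure E) : ℝ :=
  (∫ x, ‖x‖ ^ p ∂μ) ^ (1 / p)


open scoped ENNReal

theorem momentP_nonneg {E : Type*} [MeasurableSpace E] [NormedAddCommGroup E] (p : ℝ)
    (μ : Measure E) : 0 ≤ momentP p μ :=
  Real.rpow_nonneg (integral_nonneg fun _ => by positivity) _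

section Lp

variable {γ : Type*} [MeasurableSpace γ] {m : Measure γ}

theorem MeasureTheory.MemLp.eLpNorm_ofReal_eq {E : Type*} [NormedAddCommGroup E] {f : γ → E} {p : ℝ}
    (hp : 0 < p) (hf : MemLp f (ENNReal.ofReal p) m) :
    eLpNorm f (ENNReal.ofReal p) m = ENNReal.ofReal ((∫ z, ‖f z‖ ^ p ∂m) ^ (1 / p)) := by
  rw [hf.eLpNorm_eq_integral_rpow_norm (by simpa using hp) ENNReal.ofReal_ne_top,
    ENNReal.toReal_ofReal hp.le, one_div]

theorem memLp_ofReal_of_integrable_norm_rpow {E : Type*} [NormedAddCommGroup E] {f : γ → E}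
    {p : ℝ} (hp : 0 < p) (hf : AEStronglyMeasurable f m)
    (hint : Integrable (fun z => ‖f z‖ ^ p) m) : MemLp f (ENNReal.ofReal p) m :=
  (integrable_norm_rpow_iff hf (by simpa using hp) ENNReal.ofReal_ne_top).mp
    (by rwa [ENNReal.toReal_ofReal hp.le])

theorem eLpNorm_one_mul_le_mul_eLpNorm {p q : ℝ≥0∞} [p.HolderConjugate q] {f g : γ → ℝ}
    (hf : AEStronglyMeasurable f m) (hg : AEStronglyMeasurable g m) :
    eLpNorm (fun z => f z * g z) 1 m ≤ eLpNorm f p m * eLpNorm g q m := by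
  simpa using eLpNorm_le_eLpNorm_mul_eLpNorm'_of_norm (r := 1) hf hg (· * ·) 1
    (ae_of_all _ fun z => by simp [norm_mul])

variable [IsProbabilityMeasure m] {p : ℝ≥0∞}

theorem eLpNorm_const_add_le (hp : 1 ≤ p) (c : ℝ) {f : γ → ℝ} (hf : AEStronglyMeasurable f m) :
    eLpNorm (fun z => c + f z) p m ≤ ‖c‖ₑ + eLpNorm f p m := by
  have hconst : eLpNorm (fun _ : γ => c) p m = ‖c‖ₑ := by
    simp [eLpNorm_const c (one_pos.trans_le hp).ne' (IsProbabilityMeasure.ne_zero m)]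
  exact (eLpNorm_add_le aestronglyMeasurable_const hf hp).trans_eq (by rw [hconst])

theorem eLpNorm_const_add_norm_rpow_add_norm_rpow_le {E : Type*} [NormedAddCommGroup E]
    (hp : 1 ≤ p) (c : ℝ) {α : ℝ} (hα : 0 < α) {X Y : γ → E}
    (hX : AEStronglyMeasurable X m) (hY : AEStronglyMeasurable Y m) :
    eLpNorm (fun z => c + ‖X z‖ ^ α + ‖Y z‖ ^ α) p m ≤
      ‖c‖ₑ + eLpNorm X (p * ENNReal.ofReal α) m ^ α +
        eLpNorm Y (p * ENNReal.ofReal α) m ^ α := by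
  have hXα : AEStronglyMeasurable (fun z => ‖X z‖ ^ α) m :=
    (hX.norm.aemeasurable.pow_const α).aestronglyMeasurable
  have hYα : AEStronglyMeasurable (fun z => ‖Y z‖ ^ α) m :=
    (hY.norm.aemeasurable.pow_const α).aestronglyMeasurable
  calc eLpNorm (fun z => c + ‖X z‖ ^ α + ‖Y z‖ ^ α) p m
      ≤ eLpNorm (fun z => c + ‖X z‖ ^ α) p m + eLpNorm (fun z => ‖Y z‖ ^ α) p m :=
        eLpNorm_add_le (aestronglyMeasurable_const.add hXα) hYα hp
    _ ≤ ‖c‖ₑ + eLpNorm (fun z => ‖X z‖ ^ α) p m + eLpNorm (fun z => ‖Y z‖ ^ α) p m := by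
        gcongr; exact eLpNorm_const_add_le hp c hXα
    _ = _ := by rw [eLpNorm_norm_rpow X hα, eLpNorm_norm_rpow Y hα]

end Lp

theorem Real.holderConjugate_add_one_div {α : ℝ} (hα : 0 < α) :
    (α + 1).HolderConjugate ((α + 1) / α) := by
  rw [Real.holderConjugate_iff, inv_div]
  constructor
  · linarith
  · field_simp
    ring

section Coupling

variable {E : Type*} [MeasurableSpace E] {m : Measure (E × E)} {μ ν : Measure E}

theorem IsCoupling.measurePreserving_fst (hm : IsCoupling m μ ν) :
    MeasurePreserving Prod.fst m μ :=
  ⟨measurable_fst, hm.1⟩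

theorem IsCoupling.measurePreserving_snd (hm : IsCoupling m μ ν) :
    MeasurePreserving Prod.snd m ν :=
  ⟨measurable_snd, hm.2⟩

theorem isCoupling_prod [IsProbabilityMeasure μ] [IsProbabilityMeasure ν] :
    IsCoupling (μ.prod ν) μ ν := by
  constructor <;> simp

theorem IsCoupling.integral_sub_integral {F : Type*} [NormedAddCommGroup F] [NormedSpace ℝ F]
    (hm : IsCoupling m μ ν) {f g : E → F} (hf : Integrable f μ) (hg : Integrable g ν) :
    ∫ x, f x ∂μ - ∫ y, g y ∂ν = ∫ z, (f z.1 - g z.2) ∂m := by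
  have hfst := hm.measurePreserving_fst
  have hsnd := hm.measurePreserving_snd
  have hf' : ∫ x, f x ∂μ = ∫ z, f z.1 ∂m := by
    rw [← hfst.map_eq, integral_map hfst.aemeasurable (hfst.map_eq ▸ hf.1)]
  have hg' : ∫ y, g y ∂ν = ∫ z, g z.2 ∂m := by
    rw [← hsnd.map_eq, integral_map hsnd.aemeasurable (hsnd.map_eq ▸ hg.1)]
  rw [hf', hg']
  exact (integral_sub (hfst.integrable_comp_of_integrable hf)
    (hsnd.integrable_comp_of_integrable hg)).symm

end Coupling

theorem le_mul_add_csInf {s : Set ℝ} (hs : s.Nonempty) {k a D : ℝ} (hk : 0 ≤ k)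
    (h : ∀ c ∈ s, D ≤ k * (a + c)) : D ≤ k * (a + sInf s) := by
  rcases hk.eq_or_lt with rfl | hk
  · obtain ⟨c₀, hc₀⟩ := hs
    simpa using h c₀ hc₀
  have : D / k - a ≤ sInf s := le_csInf hs fun c hc => by
    rw [sub_le_iff_le_add', div_le_iff₀ hk, mul_comm]
    exact h c hc
  rwa [sub_le_iff_le_add', div_le_iff₀ hk, mul_comm] at this

section Drift

variable {E F : Type*} [NormedAddCommGroup E] [MeasurableSpace E] [BorelSpace E]
  [SecondCountableTopology E] [NormedAddCommGroup F] [NormedSpace ℝ F]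
  {b : E → E → F} {x y : E} {μ ν : Measure E} {m : Measure (E × E)} [IsProbabilityMeasure m]

theorem enorm_integral_sub_integral_le_of_isCoupling {g α : ℝ} (hα : 0 < α) {p q : ℝ≥0∞}
    [p.HolderConjugate q] (hqα : q * ENNReal.ofReal α = p)
    (hb : ∀ x' y', ‖b x x' - b y y'‖ ≤
      g * (‖x - y‖ + ‖x' - y'‖) * (1 + ‖x‖ ^ α + ‖y‖ ^ α + ‖x'‖ ^ α + ‖y'‖ ^ α))
    (hbμ : Integrable (b x) μ) (hbν : Integrable (b y) ν) (hm : IsCoupling m μ ν) :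
    ‖(∫ x', b x x' ∂μ) - ∫ x', b y x' ∂ν‖ₑ ≤
      ‖g‖ₑ * ((‖‖x - y‖‖ₑ + eLpNorm (fun z : E × E => z.1 - z.2) p m) *
        (‖1 + ‖x‖ ^ α + ‖y‖ ^ α‖ₑ + eLpNorm (fun z : E × E => z.1) p m ^ α +
          eLpNorm (fun z : E × E => z.2) p m ^ α)) := by
  set K := 1 + ‖x‖ ^ α + ‖y‖ ^ α
  have hX : AEStronglyMeasurable (fun z : E × E => z.1) m := by fun_prop
  have hY : AEStronglyMeasurable (fun z : E × E => z.2) m := by fun_prop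
  calc ‖(∫ x', b x x' ∂μ) - ∫ x', b y x' ∂ν‖ₑ
      = ‖∫ z, (b x z.1 - b y z.2) ∂m‖ₑ := by rw [hm.integral_sub_integral hbμ hbν]
    _ ≤ eLpNorm (fun z => b x z.1 - b y z.2) 1 m :=
      (enorm_integral_le_lintegral_enorm _).trans_eq eLpNorm_one_eq_lintegral_enorm.symm
    _ ≤ eLpNorm (g • fun z : E × E =>
          (‖x - y‖ + ‖z.1 - z.2‖) * (K + ‖z.1‖ ^ α + ‖z.2‖ ^ α)) 1 m :=
      eLpNorm_mono_real fun z => (hb z.1 z.2).trans_eq <| by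
        simp only [Pi.smul_apply, smul_eq_mul, K]; ring
    _ = ‖g‖ₑ * eLpNorm (fun z : E × E =>
          (‖x - y‖ + ‖z.1 - z.2‖) * (K + ‖z.1‖ ^ α + ‖z.2‖ ^ α)) 1 m :=
      eLpNorm_const_smul _ _ _ _
    _ ≤ ‖g‖ₑ * (eLpNorm (fun z : E × E => ‖x - y‖ + ‖z.1 - z.2‖) p m *
          eLpNorm (fun z : E × E => K + ‖z.1‖ ^ α + ‖z.2‖ ^ α) q m) := by
      gcongr
      exact eLpNorm_one_mul_le_mul_eLpNorm (by fun_prop) (by fun_prop)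
    _ ≤ _ := by
      gcongr
      · exact (eLpNorm_const_add_le (ENNReal.HolderConjugate.one_le p q) _
          (hX.sub hY).norm).trans_eq (by rw [eLpNorm_norm]; rfl)
      · rw [← hqα]
        exact eLpNorm_const_add_norm_rpow_add_norm_rpow_le
          (ENNReal.HolderConjugate.one_le q p) K hα hX hY

theorem norm_integral_sub_integral_le_of_isCoupling {g α : ℝ} (hg : 0 ≤ g) (hα : 0 < α)
    (hb : ∀ x' y', ‖b x x' - b y y'‖ ≤
      g * (‖x - y‖ + ‖x' - y'‖) * (1 + ‖x‖ ^ α + ‖y‖ ^ α + ‖x'‖ ^ α + ‖y'‖ ^ α))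
    (hμ : Integrable (fun x => ‖x‖ ^ (α + 1)) μ) (hν : Integrable (fun x => ‖x‖ ^ (α + 1)) ν)
    (hbμ : Integrable (b x) μ) (hbν : Integrable (b y) ν) (hm : IsCoupling m μ ν) :
    ‖(∫ x', b x x' ∂μ) - ∫ x', b y x' ∂ν‖ ≤
      g * (‖x - y‖ + (∫ z, ‖z.1 - z.2‖ ^ (α + 1) ∂m) ^ (1 / (α + 1))) *
        (1 + ‖x‖ ^ α + ‖y‖ ^ α + momentP (α + 1) μ ^ α + momentP (α + 1) ν ^ α) := by
  have hp : 0 < α + 1 := by linarith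
  have : (ENNReal.ofReal (α + 1)).HolderConjugate (ENNReal.ofReal ((α + 1) / α)) :=
    (Real.holderConjugate_add_one_div hα).ennrealOfReal
  have hqα : ENNReal.ofReal ((α + 1) / α) * ENNReal.ofReal α = ENNReal.ofReal (α + 1) := by
    rw [← ENNReal.ofReal_mul (by positivity), div_mul_cancel₀ _ hα.ne']
  have key := enorm_integral_sub_integral_le_of_isCoupling hα hqα hb hbμ hbν hm
  have hmoment {ρ : Measure E} (h : Integrable (fun x => ‖x‖ ^ (α + 1)) ρ) :
      MemLp id (ENNReal.ofReal (α + 1)) ρ :=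
    memLp_ofReal_of_integrable_norm_rpow hp aestronglyMeasurable_id h
  have hX : MemLp (fun z : E × E => z.1) (ENNReal.ofReal (α + 1)) m :=
    (hmoment hμ).comp_measurePreserving hm.measurePreserving_fst
  have hY : MemLp (fun z : E × E => z.2) (ENNReal.ofReal (α + 1)) m :=
    (hmoment hν).comp_measurePreserving hm.measurePreserving_snd
  have hXμ : eLpNorm (fun z : E × E => z.1) (ENNReal.ofReal (α + 1)) m =
      ENNReal.ofReal (momentP (α + 1) μ) :=
    (eLpNorm_comp_measurePreserving aestronglyMeasurable_id hm.measurePreserving_fst).trans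
      ((hmoment hμ).eLpNorm_ofReal_eq hp)
  have hYν : eLpNorm (fun z : E × E => z.2) (ENNReal.ofReal (α + 1)) m =
      ENNReal.ofReal (momentP (α + 1) ν) :=
    (eLpNorm_comp_measurePreserving aestronglyMeasurable_id hm.measurePreserving_snd).trans
      ((hmoment hν).eLpNorm_ofReal_eq hp)
  have hcost : eLpNorm (fun z : E × E => z.1 - z.2) (ENNReal.ofReal (α + 1)) m =
      ENNReal.ofReal ((∫ z, ‖z.1 - z.2‖ ^ (α + 1) ∂m) ^ (1 / (α + 1))) :=
    (hX.sub hY).eLpNorm_ofReal_eq hp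
  have hW : 0 ≤ (∫ z, ‖z.1 - z.2‖ ^ (α + 1) ∂m) ^ (1 / (α + 1)) :=
    Real.rpow_nonneg (integral_nonneg fun _ => by positivity) _
  have hMμ := momentP_nonneg (α + 1) μ
  have hMν := momentP_nonneg (α + 1) ν
  rw [hXμ, hYν, hcost,
    Real.enorm_eq_ofReal hg, Real.enorm_eq_ofReal (norm_nonneg _),
    Real.enorm_eq_ofReal (by positivity), ENNReal.ofReal_rpow_of_nonneg hMμ hα.le,
    ENNReal.ofReal_rpow_of_nonneg hMν hα.le,
    ← ENNReal.ofReal_add (norm_nonneg _) hW, ← ENNReal.ofReal_add (by positivity) (by positivity),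
    ← ENNReal.ofReal_add (by positivity) (by positivity),
    ← ENNReal.ofReal_mul (by positivity), ← ENNReal.ofReal_mul hg, ← ofReal_norm,
    ENNReal.ofReal_le_ofReal_iff (by positivity)] at key
  exact key.trans_eq (mul_assoc _ _ _).symm

end Drift

theorem stmt_11 {d : ℕ} (g α : ℝ) (hg : 0 ≤ g) (hα : 0 < α)
    (b : EuclideanSpace ℝ (Fin d) → EuclideanSpace ℝ (Fin d) → EuclideanSpace ℝ (Fin d))
    (hb : ∀ x y x' y', ‖b x x' - b y y'‖ ≤
      g * (‖x - y‖ + ‖x' - y'‖) * (1 + ‖x‖ ^ α + ‖y‖ ^ α + ‖x'‖ ^ α + ‖y'‖ ^ α))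
    (μ ν : Measure (EuclideanSpace ℝ (Fin d)))
    [IsProbabilityMeasure μ] [IsProbabilityMeasure ν]
    (hμ : Integrable (fun x => ‖x‖ ^ (α + 1)) μ)
    (hν : Integrable (fun x => ‖x‖ ^ (α + 1)) ν)
    (hbμ : ∀ x, Integrable (fun x' => b x x') μ)
    (hbν : ∀ x, Integrable (fun x' => b x x') ν)
    (x y : EuclideanSpace ℝ (Fin d)) :
    ‖(∫ x', b x x' ∂μ) - ∫ x', b y x' ∂ν‖ ≤
      g * (‖x - y‖ + wassersteinDist (α + 1) μ ν) *
        (1 + ‖x‖ ^ α + ‖y‖ ^ α + momentP (α + 1) μ ^ α + momentP (α + 1) ν ^ α) := by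
  have hMμ := momentP_nonneg (α + 1) μ
  have hMν := momentP_nonneg (α + 1) ν
  rw [mul_right_comm, wassersteinDist]
  refine le_mul_add_csInf ?_ (by positivity) ?_
  · exact ⟨_, μ.prod ν, inferInstance, isCoupling_prod, rfl⟩
  rintro _ ⟨m, _, hm, rfl⟩
  rw [mul_right_comm]
  exact norm_integral_sub_integral_le_of_isCoupling hg hα (hb x y) hμ hν (hbμ x) (hbν y) hm
end
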